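/- arXiv:1110.0822 — 2 statements merged into one kernel-verified Lean document; each statement's English description precedes it below -/
import Mathlib

section
/- Let N ≥ 2 and m ≥ 1. Let G_N be the group with presentation on generators g₁, …, g_N and relators R_k = [g_N g_{N−1} ⋯ g_{k+1}, g_k g_{k−1} ⋯ g₁] for k = 1, …, N−1, and let φ_m : G_N → ℤ/mℤ be the homomorphism sending every gᵢ to 1. Then the abelianization of ker φ_m can be generated by 2 + (N−2)·gcd(m, N) elements. -/
/-!
Write `t = g₁` and `z = g_N ⋯ g₁`. The relator `R_k` says that `z = (g_N ⋯ g_{k+1}) (g_k ⋯ g₁)`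
commutes with `g_k ⋯ g₁` for every `k`, so `z` is central.

Since `φ_m` takes the same value on all generators, Reidemeister–Schreier with transversal `{t^j}`
shows that `ker φ_m` is generated by `a = t^m` and the `x_{i,j} = t^j gᵢ t^{-(j+1)}`, `j ∈ ℤ`.
Conjugation by `a` shifts `j` by `m` and, `z` being central, conjugation by `w = z t^{-N} ∈ ker φ_m`
shifts `j` by `-N`; so the `x_{i,j}` with `0 ≤ j < gcd(m, N)` suffice. Finally `x_{1,j} = 1`, and
telescoping `w = t^j z t^{-(j+N)}` expresses `x_{N,j}` through `w` and the `x_{i,j'}` with `i < N`.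
Hence `ker φ_m` itself, and so its abelianization, is generated by `2 + (N-2)·gcd(m, N)` elements.
-/

open Subgroup

open scoped commutatorElement

section Schreier

variable {G H : Type*} [Group G] [Group H]

def schreierGen (t g : G) (j : ℤ) : G := t ^ j * g * t ^ (-(j + 1))

theorem schreierGen_add (t g : G) (j n : ℤ) :
    schreierGen t g (j + n) = t ^ n * schreierGen t g j * (t ^ n)⁻¹ := by
  simp only [schreierGen]; group

theorem schreierGen_self (t : G) (j : ℤ) : schreierGen t t j = 1 := by
  simp only [schreierGen]; group

theorem schreierGen_zero_mul (t g : G) : schreierGen t g 0 * t = g := by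
  simp only [schreierGen]; group

theorem map_schreierGen (φ : G →* H) {t g : G} (h : φ g = φ t) (j : ℤ) :
    φ (schreierGen t g j) = 1 := by
  simp only [schreierGen, map_mul, map_zpow, h]; group

/-- Reidemeister–Schreier with transversal `{t ^ j}`: the closure `L` of the right-hand side is
normal, and `G = L ⊔ zpowers t`. -/
theorem ker_le_closure_schreierGen {X : Set G} (hX : Subgroup.closure X = ⊤) (φ : G →* H)
    {t : G} (hXt : ∀ x ∈ X, φ x = φ t) :
    φ.ker ≤
      Subgroup.closure (insert (t ^ orderOf (φ t)) (⋃ x ∈ X, Set.range (schreierGen t x))) := by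
  set L := Subgroup.closure (insert (t ^ orderOf (φ t)) (⋃ x ∈ X, Set.range (schreierGen t x)))
  have hmem {x : G} (hx : x ∈ X) (j : ℤ) : schreierGen t x j ∈ L :=
    Subgroup.subset_closure (Set.mem_insert_of_mem _ (Set.mem_biUnion hx ⟨j, rfl⟩))
  have hLker : L ≤ φ.ker := by
    rw [closure_le]
    rintro _ (rfl | ⟨_, ⟨x, rfl⟩, _, ⟨hx, rfl⟩, j, rfl⟩)
    · simp [pow_orderOf_eq_one]
    · exact map_schreierGen φ (hXt x hx) j
  have hconj (n : ℤ) {h : G} (hh : h ∈ L) : t ^ n * h * (t ^ n)⁻¹ ∈ L := by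
    suffices L ≤ L.comap (MulAut.conj (t ^ n)).toMonoidHom by
      simpa only [mem_comap, MulEquiv.coe_toMonoidHom, MulAut.conj_apply] using this hh
    rw [closure_le]
    rintro _ (rfl | ⟨_, ⟨x, rfl⟩, _, ⟨hx, rfl⟩, j, rfl⟩) <;>
      simp only [SetLike.mem_coe, mem_comap, MulEquiv.coe_toMonoidHom, MulAut.conj_apply]
    · rw [← zpow_natCast, zpow_mul_comm, mul_inv_cancel_right, zpow_natCast]
      exact Subgroup.subset_closure (Set.mem_insert _ _)
    · rw [← schreierGen_add]
      exact hmem hx _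
  have ht : t ∈ normalizer (L : Set G) := mem_normalizer_iff.2 fun h =>
    ⟨fun hh => by simpa using hconj 1 hh, fun hh => by simpa [mul_assoc] using hconj (-1) hh⟩
  have hL : L.Normal := normalizer_eq_top_iff.1 <| eq_top_iff.2 <| hX ▸ (closure_le _).2
    fun x hx => schreierGen_zero_mul t x ▸ mul_mem (le_normalizer (hmem hx 0)) ht
  have hsup : L ⊔ zpowers t = ⊤ := eq_top_iff.2 <| hX ▸ (closure_le _).2 fun x hx =>
    schreierGen_zero_mul t x ▸
      mul_mem (mem_sup_left (hmem hx 0)) (mem_sup_right (mem_zpowers t))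
  intro g hg
  obtain ⟨l, hl, _, ⟨n, rfl⟩, rfl⟩ :=
    (normal_mul L (zpowers t)).le (hsup ▸ mem_top g : g ∈ ↑(L ⊔ zpowers t))
  have hn : φ t ^ n = 1 := by
    simpa [(MonoidHom.mem_ker.1 (hLker hl) : φ l = 1)] using hg
  obtain ⟨k, rfl⟩ := orderOf_dvd_iff_zpow_eq_one.2 hn
  simp only [zpow_mul, zpow_natCast]
  exact mul_mem hl (zpow_mem (Subgroup.subset_closure (Set.mem_insert _ _)) k)

end Schreier

theorem Subgroup.conj_mem_iff_of_inv_mul_mem_center {G : Type*} [Group G] {E : Subgroup G}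
    {u s : G} (hu : u ∈ E) (hs : u⁻¹ * s ∈ center G) (y : G) :
    s * y * s⁻¹ ∈ E ↔ y ∈ E := by
  have hconj : s * y * s⁻¹ = u * y * u⁻¹ := by
    calc s * y * s⁻¹ = u * ((u⁻¹ * s) * y) * (u⁻¹ * s)⁻¹ * u⁻¹ := by group
      _ = u * (y * (u⁻¹ * s)) * (u⁻¹ * s)⁻¹ * u⁻¹ := by rw [mem_center_iff.1 hs y]
      _ = u * y * u⁻¹ := by group
  rw [hconj, E.mul_mem_cancel_right (inv_mem hu), E.mul_mem_cancel_left hu]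

theorem Function.Periodic.map_emod_gcd {α : Type*} {f : ℤ → α} {a b : ℕ}
    (ha : Function.Periodic f a) (hb : Function.Periodic f b) (j : ℤ) :
    f (j % (Nat.gcd a b : ℤ)) = f j := by
  have hd : Function.Periodic f (Nat.gcd a b) := by
    rw [Nat.gcd_eq_gcd_ab, mul_comm (a : ℤ), mul_comm (b : ℤ)]
    exact (ha.int_mul _).add_period (hb.int_mul _)
  rw [Int.emod_def, mul_comm]
  exact hd.sub_int_mul_eq _

theorem Abelianization.exists_finset_card_le_closure_eq_top {G : Type*} [Group G]
    {K : Subgroup G} (T : Finset G) (hTK : (T : Set G) ⊆ K) (hK : K ≤ Subgroup.closure T) :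
    ∃ S : Finset (Abelianization K),
      S.card ≤ T.card ∧ Subgroup.closure (S : Set (Abelianization K)) = ⊤ := by
  classical
  obtain rfl : K = Subgroup.closure T := le_antisymm hK ((closure_le K).2 hTK)
  refine ⟨(T.subtype (· ∈ Subgroup.closure (T : Set G))).image Abelianization.of, ?_, ?_⟩
  · exact Finset.card_image_le.trans
      ((Finset.card_subtype _ _).trans_le (Finset.card_filter_le _ _))
  have hpre : ((T.subtype (· ∈ Subgroup.closure (T : Set G))) :
      Set (Subgroup.closure (T : Set G))) = (Subgroup.closure (T : Set G)).subtype ⁻¹' T := by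
    ext; simp
  rw [Finset.coe_image, ← MonoidHom.map_closure, hpre, closure_preimage_eq_top,
    map_top_of_surjective _ QuotientGroup.mk_surjective]

def pencilRels (N : ℕ) : Set (FreeGroup (Fin N)) :=
  { w | ∃ k : ℕ, 1 ≤ k ∧ k ≤ N - 1 ∧
      w = ⁅(((List.finRange N).drop k).reverse.map FreeGroup.of).prod,
           (((List.finRange N).take k).reverse.map FreeGroup.of).prod⁆ }

abbrev PencilGroup (N : ℕ) := PresentedGroup (pencilRels N)

namespace PencilGroup

open PresentedGroup

variable {N : ℕ}

/-- `partialProd k = g_k ⋯ g₁` in the `1`-indexed notation of the statement; in the code the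
generators are indexed by `Fin N`, so this is `of (k - 1) * ⋯ * of 0`. -/
def partialProd (k : ℕ) : PencilGroup N :=
  PresentedGroup.mk _ (((List.finRange N).take k).reverse.map FreeGroup.of).prod

theorem partialProd_zero : (partialProd 0 : PencilGroup N) = 1 := by
  simp [partialProd]

theorem partialProd_succ {k : ℕ} (hk : k < N) :
    (partialProd (k + 1) : PencilGroup N) = of ⟨k, hk⟩ * partialProd k := by
  simp [partialProd, List.take_add_one, hk, PresentedGroup.of]

theorem commute_partialProd {k : ℕ} (hk : k ≤ N) :
    Commute (partialProd N : PencilGroup N) (partialProd k) := by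
  rcases Nat.eq_zero_or_pos k with rfl | hk0
  · rw [partialProd_zero]; exact Commute.one_right _
  rcases hk.eq_or_lt with rfl | hkN
  · exact Commute.refl _
  have hrel : PresentedGroup.mk (pencilRels N)
      ⁅(((List.finRange N).drop k).reverse.map FreeGroup.of).prod,
        (((List.finRange N).take k).reverse.map FreeGroup.of).prod⁆ = 1 :=
    one_of_mem ⟨k, hk0, by omega, rfl⟩
  rw [map_commutatorElement, commutatorElement_eq_one_iff_commute] at hrel
  have hsplit : (partialProd N : PencilGroup N) =
      PresentedGroup.mk _ (((List.finRange N).drop k).reverse.map FreeGroup.of).prod *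
        partialProd k := by
    rw [partialProd, partialProd, ← map_mul, ← List.prod_append, ← List.map_append,
      ← List.reverse_append, List.take_append_drop, List.take_of_length_le (by simp)]
  rw [hsplit]
  exact hrel.mul_left (Commute.refl _)

theorem partialProd_mem_center : (partialProd N : PencilGroup N) ∈ center (PencilGroup N) := by
  rw [← centralizer_univ, ← coe_top, ← closure_range_of, centralizer_closure]
  refine mem_centralizer_iff.2 (Set.forall_mem_range.2 fun i => ?_)
  have hi : (of i : PencilGroup N) = partialProd (i + 1) * (partialProd i)⁻¹ := by
    rw [partialProd_succ i.isLt, mul_inv_cancel_right]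
  rw [hi]
  exact ((commute_partialProd i.isLt).mul_right
    (commute_partialProd i.isLt.le).inv_right).eq.symm

theorem map_partialProd {H : Type*} [Group H] (φ : PencilGroup N →* H) {g : H}
    (hφ : ∀ i, φ (of i) = g) {k : ℕ} (hk : k ≤ N) : φ (partialProd k) = g ^ k := by
  induction k with
  | zero => simp [partialProd_zero]
  | succ k ih => rw [partialProd_succ (by omega), map_mul, hφ, ih (by omega), pow_succ']

variable [NeZero N]

theorem zpow_mul_partialProd_mul_zpow_mem {E : Subgroup (PencilGroup N)}
    (hE : ∀ i : Fin N, (i : ℕ) < N - 1 → ∀ j, schreierGen (of 0) (of i) j ∈ E)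
    {k : ℕ} (hk : k ≤ N - 1) (j : ℤ) : of 0 ^ j * partialProd k * of 0 ^ (-(j + k)) ∈ E := by
  induction k generalizing j with
  | zero => simp [partialProd_zero]
  | succ k ih =>
    have hsplit :
        (of 0 : PencilGroup N) ^ j * partialProd (k + 1) * of 0 ^ (-(j + (k + 1 : ℕ))) =
        schreierGen (of 0) (of ⟨k, by omega⟩) j *
          (of 0 ^ (j + 1) * partialProd k * of 0 ^ (-(j + 1 + k))) := by
      rw [partialProd_succ (by omega)]; simp only [schreierGen]; push_cast; group
    rw [hsplit]
    exact mul_mem (hE _ (by simp; omega) j) (ih (by omega) _)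

theorem schreierGen_last_mem {E : Subgroup (PencilGroup N)}
    (hE : ∀ i : Fin N, (i : ℕ) < N - 1 → ∀ j, schreierGen (of 0) (of i) j ∈ E)
    (hw : partialProd N * of 0 ^ (-N : ℤ) ∈ E) {i : Fin N} (hi : N - 1 ≤ i) (j : ℤ) :
    schreierGen (of 0) (of i) j ∈ E := by
  have hz : partialProd N = of i * partialProd (N - 1) := by
    obtain ⟨n, rfl⟩ := Nat.exists_eq_add_one_of_ne_zero (NeZero.ne N)
    obtain rfl : i = Fin.last n := Fin.ext (by simp at hi ⊢; omega)
    exact partialProd_succ n.lt_add_one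
  have hcomm : (of 0 : PencilGroup N) ^ j * partialProd N = partialProd N * of 0 ^ j :=
    mem_center_iff.1 partialProd_mem_center _
  have hsplit : schreierGen (of 0) (of i) j = (partialProd N * of 0 ^ (-N : ℤ)) *
      (of 0 ^ (j + 1) * partialProd (N - 1) * of 0 ^ (-(j + 1 + (N - 1 : ℕ))))⁻¹ := by
    rw [eq_mul_inv_of_mul_eq hz.symm, schreierGen, ← mul_assoc, hcomm,
      Nat.cast_pred (NeZero.pos N)]
    group
  rw [hsplit]
  exact mul_mem hw (inv_mem (zpow_mul_partialProd_mul_zpow_mem hE le_rfl _))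

variable (N) in
open Classical in
noncomputable def kerGenerators (m : ℕ) : Finset (PencilGroup N) :=
  insert (of 0 ^ m) <| insert (partialProd N * of 0 ^ (-N : ℤ)) <|
    (Finset.Ioo 0 ⟨N - 1, Nat.sub_one_lt (NeZero.ne N)⟩ ×ˢ Finset.range (m.gcd N)).image
      fun p => schreierGen (of 0) (of p.1) p.2

open Classical in
theorem card_kerGenerators_le (m : ℕ) : (kerGenerators N m).card ≤ 2 + (N - 2) * m.gcd N := by
  unfold kerGenerators
  refine (Finset.card_insert_le _ _).trans (Nat.succ_le_succ ((Finset.card_insert_le _ _).trans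
    (Nat.succ_le_succ Finset.card_image_le))) |>.trans_eq ?_
  rw [Finset.card_product, Fin.card_Ioo, Finset.card_range, Fin.val_zero, add_comm]
  congr 2

open Classical in
theorem schreierGen_mem_closure_kerGenerators (m : ℕ) (i : Fin N) (j : ℤ) :
    schreierGen (of 0) (of i) j ∈ Subgroup.closure (kerGenerators N m : Set (PencilGroup N)) := by
  set E := Subgroup.closure (kerGenerators N m : Set (PencilGroup N))
  set t : PencilGroup N := of 0
  have ha : t ^ m ∈ E := Subgroup.subset_closure (by simp [kerGenerators, t])
  have hw : partialProd N * t ^ (-N : ℤ) ∈ E :=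
    Subgroup.subset_closure (by simp [kerGenerators, t])
  have hperiodic (g : PencilGroup N) (c : ℤ) (u : PencilGroup N) (hu : u ∈ E)
      (hc : u⁻¹ * t ^ c ∈ center (PencilGroup N)) :
      Function.Periodic (fun j => schreierGen t g j ∈ E) c := fun j => by
    simp only [schreierGen_add, conj_mem_iff_of_inv_mul_mem_center hu hc]
  have hmid (i : Fin N) (hi0 : 0 < i) (hi : (i : ℕ) < N - 1) (j : ℤ) :
      schreierGen t (of i) j ∈ E := by
    have hd : (0 : ℤ) < m.gcd N := by exact_mod_cast Nat.gcd_pos_of_pos_right m (NeZero.pos N)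
    rw [← (hperiodic (of i) m (t ^ m) ha (by simp)).map_emod_gcd
      (hperiodic (of i) N _ (inv_mem hw) (by simpa using partialProd_mem_center)) j,
      ← Int.toNat_of_nonneg (Int.emod_nonneg j hd.ne')]
    refine Subgroup.subset_closure (Finset.mem_insert_of_mem (Finset.mem_insert_of_mem
      (Finset.mem_image.2 ⟨(i, (j % m.gcd N).toNat), ?_, rfl⟩)))
    have := Int.emod_lt_of_pos j hd
    exact Finset.mem_product.2
      ⟨Finset.mem_Ioo.2 ⟨hi0, Fin.lt_def.2 hi⟩, Finset.mem_range.2 (by omega)⟩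
  have hlow (i : Fin N) (hi : (i : ℕ) < N - 1) (j : ℤ) : schreierGen t (of i) j ∈ E := by
    rcases eq_or_ne i 0 with rfl | h
    · exact (schreierGen_self t j).symm ▸ one_mem E
    · exact hmid i ((Fin.pos_iff_ne_zero' i).2 h) hi j
  rcases lt_or_ge (i : ℕ) (N - 1) with hi | hi
  · exact hlow i hi j
  · exact schreierGen_last_mem hlow hw hi j

theorem kerGenerators_subset_ker {H : Type*} [Group H] (φ : PencilGroup N →* H)
    (hφ : ∀ i, φ (of i) = φ (of 0)) :
    (kerGenerators N (orderOf (φ (of 0))) : Set (PencilGroup N)) ⊆ φ.ker := by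
  intro g hg
  simp only [kerGenerators, Finset.coe_insert, Finset.coe_image, Set.mem_insert_iff,
    Set.mem_image] at hg
  rcases hg with rfl | rfl | ⟨⟨i, j⟩, -, rfl⟩
  · simp [pow_orderOf_eq_one]
  · simp [map_partialProd φ hφ le_rfl]
  · exact map_schreierGen φ (hφ i) j

theorem ker_le_closure_kerGenerators {H : Type*} [Group H] (φ : PencilGroup N →* H)
    (hφ : ∀ i, φ (of i) = φ (of 0)) :
    φ.ker ≤ Subgroup.closure (kerGenerators N (orderOf (φ (of 0))) : Set (PencilGroup N)) := by
  refine (ker_le_closure_schreierGen (closure_range_of _) φ (Set.forall_mem_range.2 hφ)).trans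
    ((closure_le _).2 ?_)
  rintro _ (rfl | ⟨_, ⟨_, rfl⟩, _, ⟨⟨i, rfl⟩, rfl⟩, j, rfl⟩)
  · exact Subgroup.subset_closure (by simp [kerGenerators])
  · exact schreierGen_mem_closure_kerGenerators _ i j

end PencilGroup

theorem pencil_cyclic_cover_homology_generators_bound_general
    (N m : ℕ) (hN : 2 ≤ N)
    (rels : Set (FreeGroup (Fin N)))
    (hrels : rels = { w | ∃ k : ℕ, 1 ≤ k ∧ k ≤ N - 1 ∧
      w = ⁅(((List.finRange N).drop k).reverse.map FreeGroup.of).prod,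
           (((List.finRange N).take k).reverse.map FreeGroup.of).prod⁆ })
    (φ : PresentedGroup rels →* Multiplicative (ZMod m))
    (hφ : ∀ i : Fin N, φ (PresentedGroup.of i) = Multiplicative.ofAdd (1 : ZMod m)) :
    ∃ S : Finset (Abelianization (MonoidHom.ker φ)),
      S.card ≤ 2 + (N - 2) * Nat.gcd m N ∧
      Subgroup.closure (S : Set (Abelianization (MonoidHom.ker φ))) = ⊤ := by
  obtain rfl : rels = pencilRels N := hrels
  have : NeZero N := ⟨by omega⟩
  have hφ' (i : Fin N) : φ (PresentedGroup.of i) = φ (PresentedGroup.of 0) :=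
    (hφ i).trans (hφ 0).symm
  have hord : orderOf (φ (PresentedGroup.of 0)) = m := by
    rw [hφ, orderOf_ofAdd_eq_addOrderOf, ZMod.addOrderOf_one]
  obtain ⟨S, hcard, hS⟩ := Abelianization.exists_finset_card_le_closure_eq_top _
    (PencilGroup.kerGenerators_subset_ker φ hφ') (PencilGroup.ker_le_closure_kerGenerators φ hφ')
  exact ⟨S, hcard.trans ((PencilGroup.card_kerGenerators_le _).trans_eq (by rw [hord])), hS⟩

/-- For the fundamental group `G_N` of the complement of a pencil of `N`
lines (with its Arvola–Randell presentation on generators `g₁, …, g_N`, here `0`-indexed,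
with relators `R_k = [g_N ⋯ g_{k+1}, g_k ⋯ g₁]` for `1 ≤ k ≤ N−1`), and
`φ_m : G_N → ℤ/mℤ` sending every generator to `1`, the abelianization of `ker φ_m`
can be generated by `2 + (N−2)·gcd(m, N)` elements. -/
theorem pencil_cyclic_cover_homology_generators_bound
    (N m : ℕ) (hN : 2 ≤ N) (hm : 1 ≤ m)
    (rels : Set (FreeGroup (Fin N)))
    (hrels : rels = { w | ∃ k : ℕ, 1 ≤ k ∧ k ≤ N - 1 ∧
      w = ⁅(((List.finRange N).drop k).reverse.map FreeGroup.of).prod,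
           (((List.finRange N).take k).reverse.map FreeGroup.of).prod⁆ })
    (φ : PresentedGroup rels →* Multiplicative (ZMod m))
    (hφ : ∀ i : Fin N, φ (PresentedGroup.of i) = Multiplicative.ofAdd (1 : ZMod m)) :
    ∃ S : Finset (Abelianization (MonoidHom.ker φ)),
      S.card ≤ 2 + (N - 2) * Nat.gcd m N ∧
      Subgroup.closure (S : Set (Abelianization (MonoidHom.ker φ))) = ⊤ :=
  pencil_cyclic_cover_homology_generators_bound_general N m hN rels hrels φ hφ
end

section
/- Let d₁, d₂ ≥ 1 and let G be a group generated by elements a₁, …, a_{d₁}, b₁, …, b_{d₂} such that aⱼ bₖ = bₖ aⱼ for all 1 ≤ j ≤ d₁ and 1 ≤ k ≤ d₂. Let N ≥ 1 and let φ : G → ℤ/Nℤ be a group homomorphism with φ(aⱼ) = 1 and φ(bₖ) = 1 for all j, k. Then the abelianization of ker φ can be generated by d₁ + d₂ elements. -/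
/-!
Let `K = ker φ`, `u = b k₀`, `n = orderOf (φ u)`, and let `M ≤ K` be generated by `⁅K, K⁆` and the
`d₁ + d₂` elements `c * u ^ (n - 1)`, `c` running over the generators; these include `u ^ n`, hence
every `c * u⁻¹`. Conjugation by `K` preserves `M` because `⁅K, K⁆ ≤ M`. Conjugation by `u ^ (± 1)`
fixes each `aⱼ * u ^ (n - 1)`, and since `a j₀` commutes with all `bₖ`, on `bₖ * u ^ (n - 1)` it
agrees with conjugation by `u ^ (± 1) * a j₀ ^ (∓ 1) ∈ K`. So `M` is normal in `G = ⟨K, u⟩`, and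
`G ⧸ M` is cyclic, generated by the image of `u`, whose order divides `n`; as `φ` factors through
it and `φ u` has order `n`, `K = M`. Thus `Kᵃᵇ` is generated by the images of the `d₁ + d₂`
elements.
-/

open Subgroup Set

section

variable {G : Type*} [Group G]

namespace Subgroup

theorem eq_top_of_mul_inv_mem {S : Set G} (hS : closure S = ⊤) {H : Subgroup G} {u : G}
    (hu : u ∈ H) (hSu : ∀ s ∈ S, s * u⁻¹ ∈ H) : H = ⊤ :=
  eq_top_iff.mpr <| hS ▸ (closure_le H).mpr fun s hs => by simpa using mul_mem (hSu s hs) hu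

theorem le_normalizer_of_commutator_le {K M : Subgroup G} (hMK : M ≤ K) (hKM : ⁅K, K⁆ ≤ M) :
    K ≤ normalizer (M : Set G) := by
  refine le_normalizer_iff.mpr fun k hk m hm => ?_
  have := mul_mem (hKM (commutator_mem_commutator hk (hMK hm))) hm
  rwa [commutatorElement_def, inv_mul_cancel_right] at this

theorem conj_mem_of_commute {K M : Subgroup G} (hKM : K ≤ normalizer (M : Set G)) {u c x : G}
    (hcx : Commute c x) (huc : u * c ∈ K) (hx : x ∈ M) : u * x * u⁻¹ ∈ M := by
  have : u * x * u⁻¹ = u * c * x * (u * c)⁻¹ := by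
    calc u * x * u⁻¹ = u * (c * x * c⁻¹) * u⁻¹ := by rw [hcx.mul_inv_cancel]
      _ = u * c * x * (u * c)⁻¹ := by group
  exact this ▸ (hKM huc x).mp hx

theorem conj_mem_closure_sup_commutator {K : Subgroup G} [K.Normal] {T : Set G} {u m : G}
    (hu : ∀ t ∈ T, u * t * u⁻¹ ∈ closure T ⊔ ⁅K, K⁆) (hm : m ∈ closure T ⊔ ⁅K, K⁆) :
    u * m * u⁻¹ ∈ closure T ⊔ ⁅K, K⁆ := by
  have : closure T ⊔ ⁅K, K⁆ ≤ (closure T ⊔ ⁅K, K⁆).comap (MulAut.conj u).toMonoidHom :=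
    sup_le ((closure_le _).mpr hu) fun x hx => mem_sup_right (Normal.conj_mem inferInstance x hx u)
  exact this hm

theorem mem_normalizer_closure_sup_commutator {K : Subgroup G} [K.Normal] {T : Set G} {u : G}
    (hu : ∀ t ∈ T, u * t * u⁻¹ ∈ closure T ⊔ ⁅K, K⁆)
    (hu' : ∀ t ∈ T, u⁻¹ * t * u ∈ closure T ⊔ ⁅K, K⁆) :
    u ∈ normalizer ((closure T ⊔ ⁅K, K⁆ : Subgroup G) : Set G) := fun m =>
  ⟨conj_mem_closure_sup_commutator hu, fun hm => by
    simpa [mul_assoc] using conj_mem_closure_sup_commutator (u := u⁻¹) (by simpa using hu') hm⟩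

theorem mem_normalizer_closure_sup_commutator_of_commute {K : Subgroup G} [K.Normal]
    {T : Set G} {u c : G} (hKM : K ≤ normalizer ((closure T ⊔ ⁅K, K⁆ : Subgroup G) : Set G))
    (hT : ∀ t ∈ T, Commute u t ∨ Commute c t) (huc : u * c ∈ K) (huc' : u⁻¹ * c⁻¹ ∈ K) :
    u ∈ normalizer ((closure T ⊔ ⁅K, K⁆ : Subgroup G) : Set G) := by
  have key : ∀ v d : G, (∀ t ∈ T, Commute v t ∨ Commute d t) → v * d ∈ K →
      ∀ t ∈ T, v * t * v⁻¹ ∈ closure T ⊔ ⁅K, K⁆ := by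
    intro v d hvd hvdK t ht
    have htM : t ∈ closure T ⊔ ⁅K, K⁆ := mem_sup_left (subset_closure ht)
    rcases hvd t ht with hv | hd
    · rwa [hv.mul_inv_cancel]
    · exact conj_mem_of_commute hKM hd hvdK htM
  refine mem_normalizer_closure_sup_commutator (key u c hT huc) ?_
  simpa using key u⁻¹ c⁻¹ (fun t ht => (hT t ht).imp Commute.inv_left Commute.inv_left) huc'

end Subgroup

theorem MonoidHom.ker_le_of_sup_zpowers_eq_top {H : Type*} [Group H] (φ : G →* H)
    {M : Subgroup G} [M.Normal] (hMφ : M ≤ φ.ker) {u : G} (hu : u ^ orderOf (φ u) ∈ M)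
    (hMu : M ⊔ zpowers u = ⊤) : φ.ker ≤ M := by
  intro x hx
  obtain ⟨m, hm, _, ⟨i, rfl⟩, rfl⟩ := mem_sup_of_normal_left.mp (hMu ▸ mem_top x)
  have : φ u ^ i = 1 := by simpa [φ.mem_ker.mp (hMφ hm)] using hx
  obtain ⟨q, rfl⟩ := orderOf_dvd_iff_zpow_eq_one.mpr this
  simpa [zpow_mul] using mul_mem hm (zpow_mem hu q)

theorem Abelianization.closure_range_of_le_closure_sup_commutator {K : Subgroup G} {ι : Type*}
    (e : ι → K) (h : K ≤ closure (range fun i => (e i : G)) ⊔ ⁅K, K⁆) :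
    closure (range fun i => of (e i)) = ⊤ := by
  have hK : closure (range e) ⊔ commutator K = ⊤ := by
    rw [eq_top_iff, ← map_subtype_le_map_subtype, Subgroup.map_sup, map_subtype_commutator,
      MonoidHom.map_closure, ← range_comp, ← MonoidHom.range_eq_map, range_subtype]
    exact h
  rw [range_comp' of e, ← MonoidHom.map_closure,
    ← map_top_of_surjective of QuotientGroup.mk_surjective, ← hK, Subgroup.map_sup,
    (Subgroup.map_eq_bot_iff _).mpr (ker_of K).ge, sup_bot_eq]

theorem exists_closure_range_abelianization_ker_eq_top {H : Type*} [Group H] {ι κ : Type*}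
    {a : ι → G} {b : κ → G} (hgen : closure (range a ∪ range b) = ⊤)
    (hcomm : ∀ j k, Commute (a j) (b k)) (φ : G →* H) {h : H} (hφa : ∀ j, φ (a j) = h)
    (hφb : ∀ k, φ (b k) = h) (j₀ : ι) (k₀ : κ) :
    ∃ e : ι ⊕ κ → φ.ker, closure (range fun i => Abelianization.of (e i)) = ⊤ := by
  set K := φ.ker
  have hφ : ∀ i, φ (Sum.elim a b i) = h := by rintro (j | k) <;> simp [hφa, hφb]
  -- right multiplication by `b k₀ ^ (orderOf h - 1)` moves the generators into `K`
  -- and turns `b k₀` into `b k₀ ^ orderOf h`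
  let e : ι ⊕ κ → K := fun i => ⟨Sum.elim a b i * b k₀ ^ ((orderOf h : ℤ) - 1), by
    simp [K, hφ, hφb, ← zpow_one_add, pow_orderOf_eq_one]⟩
  set M := closure (range fun i => (e i : G)) ⊔ ⁅K, K⁆
  have heM : ∀ i, (e i : G) ∈ M := fun i => mem_sup_left (subset_closure (mem_range_self i))
  have hMK : M ≤ K :=
    sup_le ((closure_le K).mpr (range_subset_iff.mpr fun i => (e i).2)) (commutator_le_left K K)
  have hKnorm := le_normalizer_of_commutator_le hMK le_sup_right
  have hT : ∀ t ∈ range fun i => (e i : G), Commute (b k₀) t ∨ Commute (a j₀)⁻¹ t := by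
    rintro _ ⟨j | k, rfl⟩
    · exact .inl ((hcomm j k₀).symm.mul_right (Commute.self_zpow _ _))
    · exact .inr ((hcomm j₀ k).mul_right ((hcomm j₀ k₀).zpow_right _)).inv_left
  have hb : b k₀ ∈ normalizer (M : Set G) :=
    mem_normalizer_closure_sup_commutator_of_commute hKnorm hT (by simp [K, hφa, hφb])
      (by simp [K, hφa, hφb])
  have hgen' : closure (range (Sum.elim a b)) = ⊤ := by rwa [Set.Sum.elim_range]
  have hgenM : ∀ s ∈ range (Sum.elim a b), s * (b k₀)⁻¹ ∈ M := by
    rintro _ ⟨i, rfl⟩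
    simpa [e, mul_assoc, div_eq_mul_inv] using div_mem (heM i) (heM (Sum.inr k₀))
  have : M.Normal := normalizer_eq_top_iff.mp <| eq_top_of_mul_inv_mem hgen' hb
    fun s hs => hKnorm (hMK (hgenM s hs))
  have hKleM : K ≤ M := φ.ker_le_of_sup_zpowers_eq_top hMK
    (by simpa [hφb, e, ← zpow_one_add] using heM (Sum.inr k₀))
    (eq_top_of_mul_inv_mem hgen' (mem_sup_right (mem_zpowers _))
      fun s hs => mem_sup_left (hgenM s hs))
  exact ⟨e, Abelianization.closure_range_of_le_closure_sup_commutator e hKleM⟩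

end

theorem kernel_abelianization_generators_of_commuting_families_general
    (G : Type) [Group G] (d₁ d₂ N : ℕ) (hd₁ : 1 ≤ d₁) (hd₂ : 1 ≤ d₂)
    (a : Fin d₁ → G) (b : Fin d₂ → G)
    (hgen : Subgroup.closure (Set.range a ∪ Set.range b) = ⊤)
    (hcomm : ∀ (j : Fin d₁) (k : Fin d₂), a j * b k = b k * a j)
    (φ : G →* Multiplicative (ZMod N))
    (hφa : ∀ j, φ (a j) = Multiplicative.ofAdd (1 : ZMod N))
    (hφb : ∀ k, φ (b k) = Multiplicative.ofAdd (1 : ZMod N)) :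
    ∃ S : Finset (Abelianization (MonoidHom.ker φ)),
      S.card ≤ d₁ + d₂ ∧
      Subgroup.closure (S : Set (Abelianization (MonoidHom.ker φ))) = ⊤ := by
  classical
  obtain ⟨e, he⟩ := exists_closure_range_abelianization_ker_eq_top hgen hcomm φ hφa hφb
    ⟨0, hd₁⟩ ⟨0, hd₂⟩
  refine ⟨Finset.univ.image fun i => Abelianization.of (e i), Finset.card_image_le.trans ?_, ?_⟩
  · simp
  · rwa [Finset.coe_image, Finset.coe_univ, image_univ]

/-- If `G` is generated by two families `a₁, …, a_{d₁}` and
`b₁, …, b_{d₂}` with every `aⱼ` commuting with every `bₖ`, and `φ : G → ℤ/Nℤ` sends each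
generator to `1`, then the abelianization of `ker φ` can be generated by `d₁ + d₂`
elements. -/
theorem kernel_abelianization_generators_of_commuting_families
    (G : Type) [Group G] (d₁ d₂ N : ℕ) (hd₁ : 1 ≤ d₁) (hd₂ : 1 ≤ d₂) (hN : 1 ≤ N)
    (a : Fin d₁ → G) (b : Fin d₂ → G)
    (hgen : Subgroup.closure (Set.range a ∪ Set.range b) = ⊤)
    (hcomm : ∀ (j : Fin d₁) (k : Fin d₂), a j * b k = b k * a j)
    (φ : G →* Multiplicative (ZMod N))
    (hφa : ∀ j, φ (a j) = Multiplicative.ofAdd (1 : ZMod N))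
    (hφb : ∀ k, φ (b k) = Multiplicative.ofAdd (1 : ZMod N)) :
    ∃ S : Finset (Abelianization (MonoidHom.ker φ)),
      S.card ≤ d₁ + d₂ ∧
      Subgroup.closure (S : Set (Abelianization (MonoidHom.ker φ))) = ⊤ :=
  kernel_abelianization_generators_of_commuting_families_general G d₁ d₂ N hd₁ hd₂ a b hgen hcomm φ
    hφa hφb
end
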